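/- Let f₀, f₁ ∈ PL₀(I) satisfy the relations [f₀f₁⁻¹, f₀⁻¹f₁f₀] = 1 and [f₀f₁⁻¹, f₀⁻²f₁f₀²] = 1. Let (a,c) be an orbital of f₀ on which f₀(x) > x, which is not an orbital of f₁ but which meets the support of f₁. Then there exists p < c such that f₀ and f₁ agree on the interval [p,c]; in particular, the largest orbital (bₙ,dₙ) of f₁ in (a,c) satisfies dₙ = c. -/

import Mathlib

/-- The support of a permutation `f` of `ℝ` : the set of points moved by `f`. -/
def Supp (f : Equiv.Perm ℝ) : Set ℝ := {x : ℝ | f x ≠ x}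

/-- `IsPL0 f` says that `f` is (the extension by the identity on `ℝ \ [0,1]` of) a
piecewise-linear orientation-preserving homeomorphism of the unit interval `[0,1]`
with only finitely many breakpoints; this represents membership in `PL₀(I)`.
The finite set `B` collects the possible points of non-differentiability: away from
`B` the map is locally affine. -/
def IsPL0 (f : Equiv.Perm ℝ) : Prop :=
  StrictMono ⇑f ∧ (∀ x : ℝ, x ≤ 0 → f x = x) ∧ (∀ x : ℝ, 1 ≤ x → f x = x) ∧
    ∃ B : Finset ℝ, ∀ x : ℝ, x ∉ B → ∃ s t : ℝ, ∀ᶠ y in nhds x, f y = s * y + t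

/-- `IsOrbital f a b` : the open interval `(a,b)` is an orbital of `f`, i.e. a
connected component of `Supp f` (an open interval contained in the support whose
endpoints are fixed by `f`). -/
def IsOrbital (f : Equiv.Perm ℝ) (a b : ℝ) : Prop :=
  a < b ∧ Set.Ioo a b ⊆ Supp f ∧ f a = a ∧ f b = b

open scoped commutatorElement

/-- The two defining relations `[f₀f₁⁻¹, f₁^{f₀}] = 1` and `[f₀f₁⁻¹, f₁^{f₀²}] = 1`
of Thompson's group `F`, for the pair `(f₀, f₁)`.  The paper composes in word order
(functions act on the right), so the paper's word `f₀f₁⁻¹` is the group element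
`f₁⁻¹ * f₀` in Mathlib's left-action convention, and the conjugate
`f₁^{f₀} = f₀⁻¹f₁f₀` is the element `f₀ * f₁ * f₀⁻¹`.  Recall `⁅a,b⁆ = 1 ↔ a*b = b*a`. -/
def ThompsonRel (f₀ f₁ : Equiv.Perm ℝ) : Prop :=
  ⁅f₁⁻¹ * f₀, f₀ * f₁ * f₀⁻¹⁆ = 1 ∧ ⁅f₁⁻¹ * f₀, f₀ ^ 2 * f₁ * (f₀ ^ 2)⁻¹⁆ = 1

/-!
Write `h = f₁⁻¹ f₀` and `Kₙ = f₀ⁿ f₁ f₀⁻ⁿ`. The two relations force `h` to commute with every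
`Kₙ`, `n ≥ 1`. A map commuting with a PL map permutes the finitely many boundary points of its
support, and a strictly increasing permutation of a finite set is the identity; so `h` fixes
`f₀ⁿ⁺¹ β` for every boundary point `β` of `Supp f₁`, and every `Kₙ` fixes the boundary of
`Supp h`.

Take the orbital `(b, d)` of `f₁` through a point of `(a, c)`. If one of its end points lies in
`(a, c)`, its `f₀`-orbit climbs to `c` and `f₀ = f₁` along it, so the linear pieces of `f₀` and
`f₁` just below `c` coincide. Otherwise `(a, c) ⊆ (b, d)`. If `h` is not the identity just below
`c`, an orbital `(P, Q)` of `h` reaches `c`, and `P ≤ a`. On `(P, Q)` all the `Kₙ` commute (they are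
linear near `Q` and commute with `h`), and pulling back by powers of `f₀` shows that `f₀` and `f₁`
commute on `(b, d)`. As `f₀` fixes `a` or `c` inside `(b, d)`, it is then the identity on `(b, d)`,
contradicting `f₀ > id` on `(a, c)`. The statement about `(bₙ, dₙ)` follows because `f₁ = f₀` moves
every point just below `c`.
-/

open Set Filter Topology Function

lemma affine_coeffs_eq_of_ne {s t s' t' x y : ℝ} (hxy : x ≠ y)
    (hx : s * x + t = s' * x + t') (hy : s * y + t = s' * y + t') : s = s' ∧ t = t' := by
  have hs : s = s' := by
    have : (s - s') * (x - y) = 0 := by linear_combination hx - hy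
    simpa [sub_eq_zero, hxy] using this
  subst hs
  exact ⟨rfl, by linarith⟩

lemma affine_coeffs_eq_of_eventually {s t s' t' x : ℝ}
    (h : ∀ᶠ y in 𝓝 x, s * y + t = s' * y + t') : s = s' ∧ t = t' := by
  obtain ⟨y, hy, hyx⟩ := ((h.filter_mono nhdsWithin_le_nhds).and self_mem_nhdsWithin).exists
    (f := 𝓝[≠] x)
  exact affine_coeffs_eq_of_ne (Ne.symm hyx) h.self_of_nhds hy

lemma IsPreconnected.exists_affine {f : ℝ → ℝ} {S : Set ℝ} (hS : IsPreconnected S)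
    (hne : S.Nonempty) (hf : ∀ x ∈ S, ∃ s t : ℝ, ∀ᶠ y in 𝓝 x, f y = s * y + t) :
    ∃ s t : ℝ, ∀ x ∈ S, ∀ᶠ y in 𝓝 x, f y = s * y + t := by
  obtain ⟨x₀, hx₀⟩ := hne
  obtain ⟨s, t, hst⟩ := hf x₀ hx₀
  let P : ℝ → ℝ → Prop := fun x y =>
    ∀ s t : ℝ, (∀ᶠ z in 𝓝 x, f z = s * z + t) → ∀ᶠ z in 𝓝 y, f z = s * z + t
  have hlocal : ∀ x ∈ S, ∀ᶠ y in 𝓝[S] x, P x y ∧ P y x := by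
    intro x hx
    obtain ⟨s₀, t₀, h₀⟩ := hf x hx
    filter_upwards [nhdsWithin_le_nhds h₀.eventually_nhds] with y hy
    refine ⟨fun s t hx' => ?_, fun s t hy' => ?_⟩
    · obtain ⟨rfl, rfl⟩ := affine_coeffs_eq_of_eventually ((hx'.and h₀).mono fun z hz =>
        hz.1.symm.trans hz.2)
      exact hy
    · obtain ⟨rfl, rfl⟩ := affine_coeffs_eq_of_eventually ((hy'.and hy).mono fun z hz =>
        hz.1.symm.trans hz.2)
      exact h₀
  refine ⟨s, t, fun x hx => hS.induction₂' P hlocal (fun x y z _ _ _ hxy hyz s t h =>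
    hyz s t (hxy s t h)) hx₀ hx s t hst⟩

lemma Set.Finite.of_forall_exists_mem_Ico {α : Type*} [LinearOrder α] {S : Set α} (B : Finset α)
    (h : ∀ x ∈ S, ∀ y ∈ S, x < y → ∃ b ∈ B, x ≤ b ∧ b < y) : S.Finite := by
  classical
  let φ : α → WithTop α := fun x => (B.filter (x ≤ ·)).min
  have hφ : StrictMonoOn φ S := by
    intro x hx y hy hxy
    obtain ⟨b, hb, hxb, hby⟩ := h x hx y hy hxy
    calc φ x ≤ b := Finset.min_le (Finset.mem_filter.2 ⟨hb, hxb⟩)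
      _ < y := WithTop.coe_lt_coe.2 hby
      _ ≤ φ y := Finset.le_min fun c hc => WithTop.coe_le_coe.2 (Finset.mem_filter.1 hc).2
  refine Finite.of_finite_image ?_ hφ.injOn
  refine ((B.powerset.finite_toSet.image Finset.min).subset ?_)
  rintro _ ⟨x, -, rfl⟩
  exact ⟨_, Finset.mem_coe.2 (Finset.mem_powerset.2 (Finset.filter_subset _ _)), rfl⟩

lemma StrictMono.eqOn_id_of_image_eq {α : Type*} [LinearOrder α] {g : α → α} (hg : StrictMono g)
    {T : Set α} (hT : T.Finite) (himg : g '' T = T) : EqOn g id T := by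
  have := hT.to_subtype
  have hres : StrictMono (fun x : T => g x) := fun x y hxy => hg hxy
  have key := (hres.range_inj (g := fun x : T => (x : α)) fun x y hxy => hxy).1
    (by rw [← image_eq_range, himg]; exact Subtype.range_coe.symm)
  exact fun x hx => congrFun key ⟨x, hx⟩

section Iterate

variable {α : Type*} [ConditionallyCompleteLinearOrder α] [TopologicalSpace α] [OrderTopology α]

lemma exists_tendsto_iterate_of_le_map {g : α → α} (hg : Monotone g) (hgc : Continuous g)
    {x p : α} (hx : x ≤ g x) (hxp : x ≤ p) (hp : g p = p) :
    ∃ L ∈ Icc x p, IsFixedPt g L ∧ Tendsto (fun n => g^[n] x) atTop (𝓝 L) := by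
  have hbdd : ∀ n, g^[n] x ≤ p := fun n => (hg.iterate n hxp).trans_eq (iterate_fixed hp n)
  have hbdd' : BddAbove (range fun n => g^[n] x) := ⟨p, forall_mem_range.2 hbdd⟩
  have htd := tendsto_atTop_ciSup (hg.monotone_iterate_of_le_map hx) hbdd'
  exact ⟨_, ⟨le_ciSup hbdd' 0, ciSup_le hbdd⟩, isFixedPt_of_tendsto_iterate htd
    hgc.continuousAt, htd⟩

lemma exists_tendsto_iterate_of_map_le {g : α → α} (hg : Monotone g) (hgc : Continuous g)
    {x p : α} (hx : g x ≤ x) (hpx : p ≤ x) (hp : g p = p) :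
    ∃ L ∈ Icc p x, IsFixedPt g L ∧ Tendsto (fun n => g^[n] x) atTop (𝓝 L) := by
  obtain ⟨L, ⟨h₁, h₂⟩, hL, htd⟩ :=
    exists_tendsto_iterate_of_le_map (α := αᵒᵈ) hg.dual hgc hx hpx hp
  exact ⟨L, ⟨h₂, h₁⟩, hL, htd⟩

lemma exists_tendsto_iterate_of_mem_Icc {g : α → α} (hg : Monotone g) (hgc : Continuous g)
    {lo hi x : α} (hlo : g lo = lo) (hhi : g hi = hi) (hx : x ∈ Icc lo hi) :
    ∃ L ∈ Icc lo hi, IsFixedPt g L ∧ Tendsto (fun n => g^[n] x) atTop (𝓝 L) := by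
  rcases le_total x (g x) with hxg | hgx
  · obtain ⟨L, hL, hfix, htd⟩ := exists_tendsto_iterate_of_le_map hg hgc hxg hx.2 hhi
    exact ⟨L, ⟨hx.1.trans hL.1, hL.2⟩, hfix, htd⟩
  · obtain ⟨L, hL, hfix, htd⟩ := exists_tendsto_iterate_of_map_le hg hgc hgx hx.1 hlo
    exact ⟨L, ⟨hL.1, hL.2.trans hx.2⟩, hfix, htd⟩

lemma tendsto_iterate_nhdsLT {g : α → α} (hg : StrictMono g) (hgc : Continuous g) {x d : α}
    (hxd : x < d) (hd : g d = d) (hup : ∀ y ∈ Ico x d, y < g y) :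
    Tendsto (fun n => g^[n] x) atTop (𝓝[<] d) := by
  obtain ⟨L, hL, hfix, htd⟩ :=
    exists_tendsto_iterate_of_le_map hg.monotone hgc (hup x ⟨le_rfl, hxd⟩).le hxd.le hd
  obtain rfl : L = d := hL.2.eq_or_lt.resolve_right fun hLd => (hup L ⟨hL.1, hLd⟩).ne' hfix
  exact tendsto_nhdsWithin_iff.2 ⟨htd, Eventually.of_forall fun n =>
    (hg.iterate n hxd).trans_eq (iterate_fixed hd n)⟩

end Iterate

lemma Equiv.Perm.strictMono_inv {α : Type*} [LinearOrder α] {f : Equiv.Perm α}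
    (hf : StrictMono f) : StrictMono ⇑f⁻¹ := fun x y hxy =>
  hf.lt_iff_lt.1 (by simpa using hxy)

lemma supp_conj (c k : Equiv.Perm ℝ) : Supp (c * k * c⁻¹) = c '' Supp k := by
  ext x
  rw [Equiv.image_eq_preimage_symm]
  change c (k (c⁻¹ x)) ≠ x ↔ k (c⁻¹ x) ≠ c⁻¹ x
  rw [ne_eq, ne_eq, Equiv.Perm.eq_inv_iff_eq]

lemma image_frontier_of_strictMono {k : Equiv.Perm ℝ} (hk : StrictMono k) (S : Set ℝ) :
    k '' frontier S = frontier (k '' S) :=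
  (hk.orderIsoOfSurjective k k.surjective).toHomeomorph.image_frontier S

lemma mapsTo_Ioo_of_strictMono {f : ℝ → ℝ} (hf : StrictMono f) {a b : ℝ} (ha : f a = a)
    (hb : f b = b) : MapsTo f (Ioo a b) (Ioo a b) := by
  simpa only [ha, hb] using hf.mapsTo_Ioo (a := a) (b := b)

lemma exists_pow_apply_mem_Ioo {f : Equiv.Perm ℝ} (hf : StrictMono f) {P Q P' Q' y : ℝ}
    (hP : Tendsto (fun n => (⇑f⁻¹)^[n] P) atTop (𝓝 P'))
    (hQ : Tendsto (fun n => (⇑f⁻¹)^[n] Q) atTop (𝓝 Q')) (hy : y ∈ Ioo P' Q') :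
    ∃ m, (f ^ (m + 1)) y ∈ Ioo P Q := by
  obtain ⟨m, hmP, hmQ⟩ := (((tendsto_add_atTop_iff_nat 1).2 hP).eventually (eventually_lt_nhds hy.1)
    |>.and (((tendsto_add_atTop_iff_nat 1).2 hQ).eventually (eventually_gt_nhds hy.2))).exists
  have hmono : StrictMono (f ^ (m + 1)) := by
    rw [Equiv.Perm.coe_pow]
    exact hf.iterate _
  simp only [← Equiv.Perm.coe_pow, inv_pow] at hmP hmQ
  exact ⟨m, by simpa using hmono hmP, by simpa using hmono hmQ⟩

lemma eqOn_comm_of_eqOn_comm_conj {α : Type*} {x y : Equiv.Perm α} {S : Set α}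
    (hx : MapsTo x S S) (hy : MapsTo ⇑y⁻¹ S S) (hc : Commute (y⁻¹ * x) (x * y * x⁻¹))
    (h : EqOn ⇑(y * (x * y * x⁻¹)) ⇑(x * y * x⁻¹ * y) S) : EqOn ⇑(x * y) ⇑(y * x) S := by
  intro z hz
  set K := x * y * x⁻¹
  have hxK : x * K = y * K * y⁻¹ * x :=
    calc x * K = y * ((y⁻¹ * x) * K) := by group
      _ = y * K * y⁻¹ * x := by rw [hc.eq]; group
  have hw := h (hy (hx (hx hz)))
  have hxz := congrArg (· (x z)) hxK
  simp only [Equiv.Perm.mul_apply, K, Equiv.Perm.coe_inv, Equiv.apply_symm_apply,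
    Equiv.symm_apply_apply] at hw hxz ⊢
  exact x.injective (hxz.trans hw)

lemma commute_inv_mul_conj_pow {G : Type*} [Group G] {x y : G}
    (h₁ : Commute (y⁻¹ * x) (x * y * x⁻¹)) (h₂ : Commute (y⁻¹ * x) (x ^ 2 * y * (x ^ 2)⁻¹))
    (n : ℕ) : Commute (y⁻¹ * x) (x ^ (n + 1) * y * (x ^ (n + 1))⁻¹) := by
  set K : ℕ → G := fun n => x ^ n * y * (x ^ n)⁻¹
  have hK₁ : Commute (y⁻¹ * x) (K 1) := by simpa [K] using h₁
  have hstep : ∀ n, Commute (y⁻¹ * x) (K n) → K (n + 1) = y * K n * y⁻¹ := fun n hc =>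
    calc K (n + 1) = y * ((y⁻¹ * x) * K n * (y⁻¹ * x)⁻¹) * y⁻¹ := by simp only [K]; group
      _ = y * K n * y⁻¹ := by rw [hc.eq, mul_inv_cancel_right]
  have key : ∀ n, Commute (y⁻¹ * x) (K (n + 1)) ∧ Commute (y⁻¹ * x) (K (n + 2)) := by
    intro n
    induction n with
    | zero => exact ⟨hK₁, h₂⟩
    | succ n ih =>
      refine ⟨ih.2, ?_⟩
      have hconj : K (n + 3) = K 1 * K (n + 2) * (K 1)⁻¹ :=
        calc K (n + 3) = x * K (n + 2) * x⁻¹ := by simp only [K]; group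
          _ = x * (y * K (n + 1) * y⁻¹) * x⁻¹ := by rw [hstep (n + 1) ih.1]
          _ = K 1 * K (n + 2) * (K 1)⁻¹ := by simp only [K]; group
      rw [hconj]
      exact (hK₁.mul_right ih.2).mul_right hK₁.inv_right
  exact (key n).1

namespace IsPL0

variable {f g : Equiv.Perm ℝ}

lemma continuous (hf : IsPL0 f) : Continuous f :=
  hf.1.monotone.continuous_of_surjective f.surjective

lemma isOpen_supp (hf : IsPL0 f) : IsOpen (Supp f) :=
  isOpen_ne_fun hf.continuous continuous_id

lemma apply_eq_of_mem_frontier (hf : IsPL0 f) {x : ℝ} (hx : x ∈ frontier (Supp f)) : f x = x :=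
  not_not.1 fun hfx => hx.2 (hf.isOpen_supp.interior_eq.symm ▸ hfx)

lemma mul (hf : IsPL0 f) (hg : IsPL0 g) : IsPL0 (f * g) := by
  classical
  obtain ⟨Bf, hBf⟩ := hf.2.2.2
  obtain ⟨Bg, hBg⟩ := hg.2.2.2
  refine ⟨hf.1.comp hg.1, fun x hx => by simp [hg.2.1 x hx, hf.2.1 x hx],
    fun x hx => by simp [hg.2.2.1 x hx, hf.2.2.1 x hx], Bg ∪ Bf.image ⇑g⁻¹, fun x hx => ?_⟩
  simp only [Finset.mem_union, Finset.mem_image, not_or, not_exists, not_and] at hx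
  obtain ⟨s, t, hst⟩ := hBg x hx.1
  obtain ⟨s', t', hst'⟩ := hBf (g x) fun hgx => hx.2 _ hgx (by simp)
  refine ⟨s' * s, s' * t + t', ?_⟩
  filter_upwards [hst, (hg.continuous.tendsto x).eventually hst'] with y h₁ h₂
  rw [Equiv.Perm.mul_apply, h₂, h₁]
  ring

lemma inv (hf : IsPL0 f) : IsPL0 f⁻¹ := by
  classical
  obtain ⟨B, hB⟩ := hf.2.2.2
  have hinv := Equiv.Perm.strictMono_inv hf.1
  refine ⟨hinv, fun x hx => IsFixedPt.perm_inv (hf.2.1 x hx),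
    fun x hx => IsFixedPt.perm_inv (hf.2.2.1 x hx), B.image f, fun x hx => ?_⟩
  obtain ⟨s, t, hst⟩ := hB (f⁻¹ x) fun h => hx (Finset.mem_image.2 ⟨_, h, by simp⟩)
  have hs : s ≠ 0 := by
    rintro rfl
    obtain ⟨y, hy, hyx⟩ := ((hst.filter_mono nhdsWithin_le_nhds).and self_mem_nhdsWithin).exists
      (f := 𝓝[≠] (f⁻¹ x))
    exact hyx (f.injective (hy.trans (by simpa using hst.self_of_nhds.symm)))
  refine ⟨s⁻¹, -t / s, ?_⟩
  filter_upwards [((hinv.monotone.continuous_of_surjective f⁻¹.surjective).tendsto x).eventually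
    hst] with y hy
  simp only [Equiv.Perm.coe_inv, Equiv.apply_symm_apply] at hy ⊢
  field_simp
  linarith

end IsPL0

def pl₀ : Subgroup (Equiv.Perm ℝ) where
  carrier := {f | IsPL0 f}
  one_mem' := ⟨strictMono_id, fun _ _ => rfl, fun _ _ => rfl, ∅, fun _ _ => ⟨1, 0, by simp⟩⟩
  mul_mem' := IsPL0.mul
  inv_mem' := IsPL0.inv

lemma IsPL0.conj {c k : Equiv.Perm ℝ} (hc : IsPL0 c) (hk : IsPL0 k) : IsPL0 (c * k * c⁻¹) :=
  (hc.mul hk).mul hc.inv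

namespace IsOrbital

variable {g : Equiv.Perm ℝ} {b d : ℝ}

lemma left_mem_frontier (h : IsOrbital g b d) : b ∈ frontier (Supp g) :=
  ⟨closure_mono h.2.1 (by rw [closure_Ioo h.1.ne]; exact left_mem_Icc.2 h.1.le),
    fun hb => interior_subset hb h.2.2.1⟩

lemma right_mem_frontier (h : IsOrbital g b d) : d ∈ frontier (Supp g) :=
  ⟨closure_mono h.2.1 (by rw [closure_Ioo h.1.ne]; exact right_mem_Icc.2 h.1.le),
    fun hd => interior_subset hd h.2.2.2⟩

lemma inv (h : IsOrbital g b d) : IsOrbital g⁻¹ b d :=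
  ⟨h.1, fun _ hy hy' => h.2.1 hy (IsFixedPt.equiv_symm_iff.1 hy'), IsFixedPt.perm_inv h.2.2.1,
    IsFixedPt.perm_inv h.2.2.2⟩

lemma mapsTo (h : IsOrbital g b d) (hg : StrictMono g) : MapsTo g (Ioo b d) (Ioo b d) :=
  mapsTo_Ioo_of_strictMono hg h.2.2.1 h.2.2.2

lemma le_left_of_apply_eq (h : IsOrbital g b d) {x : ℝ} (hx : g x = x) (hxd : x < d) : x ≤ b :=
  not_lt.1 fun hbx => h.2.1 ⟨hbx, hxd⟩ hx

lemma right_le_of_apply_eq (h : IsOrbital g b d) {x : ℝ} (hx : g x = x) (hbx : b < x) : d ≤ x :=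
  not_lt.1 fun hxd => h.2.1 ⟨hbx, hxd⟩ hx

lemma lt_apply_or_apply_lt (h : IsOrbital g b d) (hg : Continuous g) :
    (∀ y ∈ Ioo b d, y < g y) ∨ ∀ y ∈ Ioo b d, g y < y := by
  by_contra! ⟨⟨y₁, hy₁, h₁⟩, ⟨y₂, hy₂, h₂⟩⟩
  obtain ⟨z, hz, hfix⟩ := isPreconnected_Ioo.intermediate_value₂ hy₁ hy₂
    hg.continuousOn continuousOn_id h₁ h₂
  exact h.2.1 hz hfix

lemma tendsto_iterate (h : IsOrbital g b d) (hg : StrictMono g) (hgc : Continuous g)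
    (hup : ∀ y ∈ Ioo b d, y < g y) {y : ℝ} (hy : y ∈ Ioo b d) :
    Tendsto (fun n => g^[n] y) atTop (𝓝[<] d) :=
  tendsto_iterate_nhdsLT hg hgc hy.2 h.2.2.2 fun z hz => hup z ⟨hy.1.trans_le hz.1, hz.2⟩

lemma strictMono_iterate (h : IsOrbital g b d) (hg : StrictMono g)
    (hup : ∀ y ∈ Ioo b d, y < g y) {y : ℝ} (hy : y ∈ Ioo b d) : StrictMono fun n => g^[n] y :=
  strictMono_nat_of_lt_succ fun n => by
    rw [iterate_succ_apply']
    exact hup _ ((h.mapsTo hg).iterate n hy)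

end IsOrbital

lemma exists_isOrbital_of_Ioo_subset {g : Equiv.Perm ℝ} (hg : Continuous g) {lo w c hi : ℝ}
    (hlo : lo ≤ w) (hglo : g lo = lo) (hwc : w < c) (hsub : Ioo w c ⊆ Supp g) (hc : c ≤ hi)
    (hghi : g hi = hi) : ∃ P Q, IsOrbital g P Q ∧ P ∈ Icc lo w ∧ Q ∈ Icc c hi := by
  have hF : IsClosed {y | g y = y} := isClosed_eq hg continuous_id
  have hP := (isCompact_Icc.inter_right hF).sSup_mem ⟨lo, ⟨le_rfl, hlo⟩, hglo⟩
  have hQ := (isCompact_Icc.inter_right hF).sInf_mem ⟨hi, ⟨hc, le_rfl⟩, hghi⟩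
  refine ⟨_, _, ⟨hP.1.2.trans_lt (hwc.trans_le hQ.1.1), fun y hy hfix => ?_, hP.2, hQ.2⟩,
    hP.1, hQ.1⟩
  rcases le_or_gt y w with hyw | hwy
  · exact hy.1.not_ge (le_csSup bddAbove_Icc.inter_of_left ⟨⟨hP.1.1.trans hy.1.le, hyw⟩, hfix⟩)
  rcases lt_or_ge y c with hyc | hcy
  · exact hsub ⟨hwy, hyc⟩ hfix
  · exact hy.2.not_ge (csInf_le bddBelow_Icc.inter_of_left ⟨⟨hcy, hy.2.le.trans hQ.1.2⟩, hfix⟩)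


namespace IsPL0

variable {f g k : Equiv.Perm ℝ}

lemma exists_affine_nhdsLE (hf : IsPL0 f) (e : ℝ) :
    ∃ s t : ℝ, ∀ᶠ y in 𝓝[≤] e, f y = s * y + t := by
  obtain ⟨B, hB⟩ := hf.2.2.2
  have hoff : ∀ᶠ y in 𝓝[<] e, y ∉ B := by
    have : ((B : Set ℝ) \ {e})ᶜ ∈ 𝓝 e := (B.finite_toSet.sdiff).isClosed.isOpen_compl.mem_nhds
      (by simp)
    filter_upwards [nhdsWithin_le_nhds this, self_mem_nhdsWithin] with y hy hye
    exact fun hyB => hy ⟨hyB, (mem_Iio.1 hye).ne⟩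
  obtain ⟨w, hwe, hw⟩ := (mem_nhdsLT_iff_exists_Ioo_subset.1 hoff)
  obtain ⟨s, t, hst⟩ := isPreconnected_Ioo.exists_affine (nonempty_Ioo.2 hwe)
    fun x hx => hB x (hw hx)
  have heq : EqOn f (fun y => s * y + t) (closure (Ioo w e)) :=
    EqOn.closure (fun y hy => (hst y hy).self_of_nhds) hf.continuous (by fun_prop)
  rw [closure_Ioo hwe.ne] at heq
  exact ⟨s, t, mem_of_superset (Ioc_mem_nhdsLE hwe) fun y hy => heq (Ioc_subset_Icc_self hy)⟩

lemma finite_frontier_supp (hf : IsPL0 f) : (frontier (Supp f)).Finite := by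
  obtain ⟨B, hB⟩ := hf.2.2.2
  -- between two boundary points lies a breakpoint: otherwise `f` is affine on `[x, y]` and fixes
  -- both ends, so it is the identity near `x`
  refine Finite.of_forall_exists_mem_Ico B fun x hx y hy hxy => ?_
  by_contra! hgap
  obtain ⟨s, t, hst⟩ := isPreconnected_Ico.exists_affine (nonempty_Ico.2 hxy)
    fun z hz => hB z fun hzB => (hgap z hzB hz.1).not_gt hz.2
  have heq : EqOn f (fun z => s * z + t) (closure (Ico x y)) :=
    EqOn.closure (fun z hz => (hst z hz).self_of_nhds) hf.continuous (by fun_prop)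
  rw [closure_Ico hxy.ne] at heq
  obtain ⟨rfl, rfl⟩ := affine_coeffs_eq_of_ne (s' := 1) (t' := 0) hxy.ne
    ((heq (left_mem_Icc.2 hxy.le)).symm.trans ((hf.apply_eq_of_mem_frontier hx).trans (by ring)))
    ((heq (right_mem_Icc.2 hxy.le)).symm.trans ((hf.apply_eq_of_mem_frontier hy).trans (by ring)))
  obtain ⟨z, hz, hzS⟩ := mem_closure_iff_nhds.1 hx.1 _ (hst x (left_mem_Ico.2 hxy))
  exact hzS (by simpa using hz)

lemma eventuallyEq_nhdsLE_of_tendsto (hf : IsPL0 f) (hg : IsPL0 g) {e : ℝ} {u : ℕ → ℝ}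
    (hu : Injective u) (hlim : Tendsto u atTop (𝓝[≤] e)) (heq : ∀ n, f (u n) = g (u n)) :
    ⇑f =ᶠ[𝓝[≤] e] ⇑g := by
  obtain ⟨s, t, hf'⟩ := hf.exists_affine_nhdsLE e
  obtain ⟨s', t', hg'⟩ := hg.exists_affine_nhdsLE e
  have hboth := hf'.and hg'
  obtain ⟨n, hn⟩ := eventually_atTop.1 (hlim.eventually hboth)
  obtain ⟨rfl, rfl⟩ := affine_coeffs_eq_of_ne (hu.ne n.lt_succ_self.ne)
    (((hn n le_rfl).1.symm.trans (heq n)).trans (hn n le_rfl).2)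
    (((hn (n + 1) n.le_succ).1.symm.trans (heq _)).trans (hn (n + 1) n.le_succ).2)
  filter_upwards [hboth] with y hy using hy.1.trans hy.2.symm

lemma exists_isOrbital_of_Ioo_subset (hg : IsPL0 g) {w c : ℝ} (hwc : w < c)
    (hsub : Ioo w c ⊆ Supp g) : ∃ P Q, IsOrbital g P Q ∧ P ≤ w ∧ c ≤ Q := by
  obtain ⟨P, Q, horb, hP, hQ⟩ := _root_.exists_isOrbital_of_Ioo_subset hg.continuous
    (min_le_left w 0) (hg.2.1 _ (min_le_right w 0)) hwc hsub (le_max_left c 1)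
    (hg.2.2.1 _ (le_max_right c 1))
  exact ⟨P, Q, horb, hP.2, hQ.1⟩

lemma exists_isOrbital_mem (hg : IsPL0 g) {x : ℝ} (hx : x ∈ Supp g) :
    ∃ P Q, IsOrbital g P Q ∧ x ∈ Ioo P Q := by
  obtain ⟨w, c, hx', hsub⟩ := mem_nhds_iff_exists_Ioo_subset.1 (hg.isOpen_supp.mem_nhds hx)
  obtain ⟨P, Q, horb, hP, hQ⟩ := hg.exists_isOrbital_of_Ioo_subset (hx'.1.trans hx'.2) hsub
  exact ⟨P, Q, horb, hP.trans_lt hx'.1, hx'.2.trans_le hQ⟩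

lemma eventuallyEq_id_or_exists_isOrbital (hg : IsPL0 g) (c : ℝ) :
    ⇑g =ᶠ[𝓝[≤] c] id ∨ ∃ P Q, IsOrbital g P Q ∧ P < c ∧ c ≤ Q := by
  by_cases hc : g c = c
  swap
  · obtain ⟨P, Q, horb, hcPQ⟩ := hg.exists_isOrbital_mem hc
    exact Or.inr ⟨P, Q, horb, hcPQ.1, hcPQ.2.le⟩
  obtain ⟨s, t, hst⟩ := hg.exists_affine_nhdsLE c
  have htc : s * c + t = c := (hst.self_of_nhdsWithin self_mem_Iic).symm.trans hc
  by_cases hs : s = 1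
  · subst hs
    left
    filter_upwards [hst] with y hy
    rw [hy, id]
    linarith
  right
  obtain ⟨w, hwc, hw⟩ := mem_nhdsLE_iff_exists_Ioc_subset.1 hst
  obtain ⟨P, Q, horb, hP, hQ⟩ := hg.exists_isOrbital_of_Ioo_subset hwc fun y hy hfix => by
    have : (s - 1) * (y - c) = 0 := by
      linear_combination (hw (Ioo_subset_Ioc_self hy)).symm.trans hfix - htc
    rcases mul_eq_zero.1 this with h | h
    · exact hs (by linarith)
    · exact hy.2.ne (by linarith)
  exact ⟨P, Q, horb, hP.trans_lt hwc, hQ⟩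

lemma apply_eq_of_mem_frontier_of_commute (hg : IsPL0 g) (hk : StrictMono k)
    (hc : Commute k g) {x : ℝ} (hx : x ∈ frontier (Supp g)) : k x = x := by
  refine hk.eqOn_id_of_image_eq hg.finite_frontier_supp ?_ hx
  rw [image_frontier_of_strictMono hk, ← supp_conj, hc.eq, mul_inv_cancel_right]

lemma tendsto_nhdsLE (hf : IsPL0 f) {Q : ℝ} (hfQ : f Q = Q) : Tendsto f (𝓝[≤] Q) (𝓝[≤] Q) := by
  simpa only [hfQ] using hf.continuous.continuousWithinAt.tendsto_nhdsWithin (x := Q)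
    (s := Iic Q) (t := Iic Q) fun y (hy : y ≤ Q) => (hf.1.monotone hy).trans_eq hfQ

lemma eventually_comm_nhdsLE (hf : IsPL0 f) (hg : IsPL0 g) {Q : ℝ} (hfQ : f Q = Q)
    (hgQ : g Q = Q) : ∀ᶠ y in 𝓝[≤] Q, f (g y) = g (f y) := by
  obtain ⟨s, t, hf'⟩ := hf.exists_affine_nhdsLE Q
  obtain ⟨s', t', hg'⟩ := hg.exists_affine_nhdsLE Q
  have htQ : s * Q + t = Q := (hf'.self_of_nhdsWithin self_mem_Iic).symm.trans hfQ
  have htQ' : s' * Q + t' = Q := (hg'.self_of_nhdsWithin self_mem_Iic).symm.trans hgQ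
  filter_upwards [hf', hg', (hg.tendsto_nhdsLE hgQ).eventually hf',
    (hf.tendsto_nhdsLE hfQ).eventually hg']
    with y h₁ h₂ h₃ h₄
  rw [h₃, h₄, h₁, h₂]
  linear_combination (1 - s') * htQ + (s - 1) * htQ'

end IsPL0

namespace IsOrbital

variable {g k k₁ k₂ : Equiv.Perm ℝ} {P Q : ℝ}

lemma lt_inv_apply_of_not_lt_apply (horb : IsOrbital g P Q) (hg : IsPL0 g)
    (hup : ¬∀ y ∈ Ioo P Q, y < g y) : ∀ y ∈ Ioo P Q, y < g⁻¹ y := fun y hy => by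
  simpa using (horb.lt_apply_or_apply_lt hg.continuous).resolve_left hup _
    (horb.inv.mapsTo hg.inv.1 hy)

/-- Near `Q` both maps are linear with fixed point `Q`, and powers of `g` carry every point of the
orbital there. -/
lemma eqOn_mul_comm_of_commute (horb : IsOrbital g P Q) (hg : IsPL0 g) (hk₁ : IsPL0 k₁)
    (hk₂ : IsPL0 k₂) (hc₁ : Commute g k₁) (hc₂ : Commute g k₂) :
    EqOn ⇑(k₁ * k₂) ⇑(k₂ * k₁) (Ioo P Q) := by
  wlog hup : ∀ y ∈ Ioo P Q, y < g y generalizing g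
  · exact this horb.inv hg.inv hc₁.inv_left hc₂.inv_left (horb.lt_inv_apply_of_not_lt_apply hg hup)
  intro y hy
  have hQ₁ := hg.apply_eq_of_mem_frontier_of_commute hk₁.1 hc₁.symm horb.right_mem_frontier
  have hQ₂ := hg.apply_eq_of_mem_frontier_of_commute hk₂.1 hc₂.symm horb.right_mem_frontier
  obtain ⟨n, hn⟩ := ((tendsto_nhdsWithin_mono_right Iio_subset_Iic_self
    (horb.tendsto_iterate hg.1 hg.continuous hup hy)).eventually
    (hk₁.eventually_comm_nhdsLE hk₂ hQ₁ hQ₂)).exists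
  apply (g ^ n).injective
  rw [← Equiv.Perm.mul_apply, ((hc₁.mul_right hc₂).pow_left n).eq, ← Equiv.Perm.mul_apply (g ^ n),
    ((hc₂.mul_right hc₁).pow_left n).eq]
  simpa [Equiv.Perm.coe_pow] using hn

/-- The fixed points of `k` in the orbital are `g`-invariant, so they accumulate at `Q`, where `k`
is linear. -/
lemma eqOn_id_of_eqOn_comm (horb : IsOrbital g P Q) (hg : IsPL0 g) (hk : IsPL0 k)
    (hc : EqOn ⇑(k * g) ⇑(g * k) (Ioo P Q)) {s : ℝ} (hs : s ∈ Ioo P Q) (hks : k s = s) :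
    EqOn k id (Ioo P Q) := by
  wlog hup : ∀ y ∈ Ioo P Q, y < g y generalizing g
  · refine this horb.inv hg.inv (fun y hy => ?_) (horb.lt_inv_apply_of_not_lt_apply hg hup)
    have := hc (horb.inv.mapsTo hg.inv.1 hy)
    simp only [Equiv.Perm.mul_apply, Equiv.Perm.coe_inv, Equiv.apply_symm_apply] at this ⊢
    rw [this, Equiv.symm_apply_apply]
  have hiter : ∀ n, ∀ y ∈ Ioo P Q, k (g^[n] y) = g^[n] (k y) := by
    intro n
    induction n with
    | zero => simp
    | succ n ih =>
      intro y hy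
      rw [iterate_succ_apply', iterate_succ_apply', ← ih y hy]
      exact hc ((horb.mapsTo hg.1).iterate n hy)
  have hid : ⇑k =ᶠ[𝓝[≤] Q] ⇑(1 : Equiv.Perm ℝ) :=
    hk.eventuallyEq_nhdsLE_of_tendsto pl₀.one_mem (horb.strictMono_iterate hg.1 hup hs).injective
      (tendsto_nhdsWithin_mono_right Iio_subset_Iic_self
        (horb.tendsto_iterate hg.1 hg.continuous hup hs)) fun n => by simp [hiter n s hs, hks]
  intro y hy
  obtain ⟨n, hn⟩ := ((tendsto_nhdsWithin_mono_right Iio_subset_Iic_self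
    (horb.tendsto_iterate hg.1 hg.continuous hup hy)).eventually hid).exists
  exact (hg.1.injective.iterate n) ((hiter n y hy).symm.trans hn)

end IsOrbital

namespace ThompsonRel

variable {f₀ f₁ : Equiv.Perm ℝ}

lemma commute_conj_pow (hrel : ThompsonRel f₀ f₁) (n : ℕ) :
    Commute (f₁⁻¹ * f₀) (f₀ ^ (n + 1) * f₁ * (f₀ ^ (n + 1))⁻¹) :=
  commute_inv_mul_conj_pow (commutatorElement_eq_one_iff_commute.1 hrel.1)
    (commutatorElement_eq_one_iff_commute.1 hrel.2) n

lemma apply_pow_eq (hrel : ThompsonRel f₀ f₁) (h₀ : IsPL0 f₀) (h₁ : IsPL0 f₁) {β : ℝ}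
    (hβ : β ∈ frontier (Supp f₁)) (n : ℕ) :
    f₀ ((f₀ ^ (n + 1)) β) = f₁ ((f₀ ^ (n + 1)) β) := by
  have hpow : IsPL0 (f₀ ^ (n + 1)) := pl₀.pow_mem h₀ (n + 1)
  have hmem : (f₀ ^ (n + 1)) β ∈ frontier (Supp (f₀ ^ (n + 1) * f₁ * (f₀ ^ (n + 1))⁻¹)) := by
    rw [supp_conj, ← image_frontier_of_strictMono hpow.1]
    exact mem_image_of_mem _ hβ
  have := (hpow.conj h₁).apply_eq_of_mem_frontier_of_commute (h₁.inv.mul h₀).1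
    (hrel.commute_conj_pow n) hmem
  exact Equiv.Perm.inv_eq_iff_eq.1 this

lemma apply_inv_pow_eq (hrel : ThompsonRel f₀ f₁) (h₀ : IsPL0 f₀) (h₁ : IsPL0 f₁) {v : ℝ}
    (hv : v ∈ frontier (Supp (f₁⁻¹ * f₀))) (n : ℕ) :
    f₁ ((f₀ ^ (n + 1))⁻¹ v) = (f₀ ^ (n + 1))⁻¹ v := by
  have := (h₁.inv.mul h₀).apply_eq_of_mem_frontier_of_commute
    (IsPL0.conj (pl₀.pow_mem h₀ (n + 1)) h₁).1 (hrel.commute_conj_pow n).symm hv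
  exact Equiv.Perm.eq_inv_iff_eq.2 (by simpa only [Equiv.Perm.mul_apply] using this)

lemma apply_eq_of_tendsto_inv_iterate (hrel : ThompsonRel f₀ f₁) (h₀ : IsPL0 f₀)
    (h₁ : IsPL0 f₁) {v L : ℝ} (hv : v ∈ frontier (Supp (f₁⁻¹ * f₀)))
    (hL : Tendsto (fun n => (⇑f₀⁻¹)^[n] v) atTop (𝓝 L)) : f₁ L = L :=
  (isClosed_eq h₁.continuous continuous_id).mem_of_tendsto ((tendsto_add_atTop_iff_nat 1).2 hL)
    (Eventually.of_forall fun n => show f₁ ((⇑f₀⁻¹)^[n + 1] v) = (⇑f₀⁻¹)^[n + 1] v by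
      simpa only [← Equiv.Perm.coe_pow, inv_pow] using hrel.apply_inv_pow_eq h₀ h₁ hv n)

/-- The orbit of a point of `frontier (Supp f₁)` under the up-bump `f₀` climbs to `c`, and `f₀`
and `f₁` agree along it, so their linear pieces just below `c` coincide. -/
lemma eventuallyEq_of_mem_frontier (hrel : ThompsonRel f₀ f₁) (h₀ : IsPL0 f₀) (h₁ : IsPL0 f₁)
    {a c β : ℝ} (horb₀ : IsOrbital f₀ a c) (hup : ∀ x ∈ Ioo a c, x < f₀ x)
    (hβ : β ∈ frontier (Supp f₁)) (hβac : β ∈ Ioo a c) : ⇑f₀ =ᶠ[𝓝[≤] c] ⇑f₁ := by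
  have hfβ := horb₀.mapsTo h₀.1 hβac
  refine h₀.eventuallyEq_nhdsLE_of_tendsto h₁ (horb₀.strictMono_iterate h₀.1 hup hfβ).injective
    (tendsto_nhdsWithin_mono_right Iio_subset_Iic_self
      (horb₀.tendsto_iterate h₀.1 h₀.continuous hup hfβ)) fun n => ?_
  simpa only [← iterate_succ_apply, ← Equiv.Perm.coe_pow] using hrel.apply_pow_eq h₀ h₁ hβ n

lemma conj_comm_of_pow_apply_mem (hrel : ThompsonRel f₀ f₁) (h₀ : IsPL0 f₀) (h₁ : IsPL0 f₁)
    {P Q y : ℝ} (horb : IsOrbital (f₁⁻¹ * f₀) P Q) {m : ℕ} (hy : (f₀ ^ (m + 1)) y ∈ Ioo P Q) :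
    (f₁ * (f₀ * f₁ * f₀⁻¹)) y = (f₀ * f₁ * f₀⁻¹ * f₁) y := by
  have hK : ∀ n, IsPL0 (f₀ ^ n * f₁ * (f₀ ^ n)⁻¹) := fun n => IsPL0.conj (pl₀.pow_mem h₀ n) h₁
  have := horb.eqOn_mul_comm_of_commute (h₁.inv.mul h₀) (hK _) (hK _) (hrel.commute_conj_pow m)
    (hrel.commute_conj_pow (m + 1)) hy
  have e₁ : f₀ ^ (m + 1) * f₁ * (f₀ ^ (m + 1))⁻¹ * (f₀ ^ (m + 1 + 1) * f₁ * (f₀ ^ (m + 1 + 1))⁻¹)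
      = f₀ ^ (m + 1) * (f₁ * (f₀ * f₁ * f₀⁻¹)) * (f₀ ^ (m + 1))⁻¹ := by
    rw [pow_succ f₀ (m + 1)]; group
  have e₂ : f₀ ^ (m + 1 + 1) * f₁ * (f₀ ^ (m + 1 + 1))⁻¹ * (f₀ ^ (m + 1) * f₁ * (f₀ ^ (m + 1))⁻¹)
      = f₀ ^ (m + 1) * (f₀ * f₁ * f₀⁻¹ * f₁) * (f₀ ^ (m + 1))⁻¹ := by
    rw [pow_succ f₀ (m + 1)]; group
  rw [e₁, e₂] at this
  simpa using this

/-- The interval is swept out by the pull-backs of `(P, Q)` under the powers of `f₀`. -/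
lemma exists_eqOn_comm (hrel : ThompsonRel f₀ f₁) (h₀ : IsPL0 f₀) (h₁ : IsPL0 f₁)
    {P Q u v : ℝ} (horb : IsOrbital (f₁⁻¹ * f₀) P Q) (hu : f₀ u = u) (hv : f₀ v = v)
    (hPu : P ≤ u) (hvQ : v ≤ Q) :
    ∃ P' Q', P' ≤ u ∧ v ≤ Q' ∧ f₁ P' = P' ∧ f₁ Q' = Q' ∧
      EqOn ⇑(f₀ * f₁) ⇑(f₁ * f₀) (Ioo P' Q') := by
  have hinv := h₀.inv
  obtain ⟨P', hP', hfP', hlimP⟩ := exists_tendsto_iterate_of_mem_Icc hinv.1.monotone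
    hinv.continuous (IsFixedPt.perm_inv (h₀.2.1 _ (min_le_right P 0))) (IsFixedPt.perm_inv hu)
    ⟨min_le_left P 0, hPu⟩
  obtain ⟨Q', hQ', hfQ', hlimQ⟩ := exists_tendsto_iterate_of_mem_Icc hinv.1.monotone
    hinv.continuous (IsFixedPt.perm_inv hv) (IsFixedPt.perm_inv (h₀.2.2.1 _ (le_max_right Q 1)))
    ⟨hvQ, le_max_left Q 1⟩
  have hf₁P' := hrel.apply_eq_of_tendsto_inv_iterate h₀ h₁ horb.left_mem_frontier hlimP
  have hf₁Q' := hrel.apply_eq_of_tendsto_inv_iterate h₀ h₁ horb.right_mem_frontier hlimQ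
  refine ⟨P', Q', hP'.2, hQ'.1, hf₁P', hf₁Q', eqOn_comm_of_eqOn_comm_conj
    (mapsTo_Ioo_of_strictMono h₀.1 (IsFixedPt.equiv_symm_iff.1 hfP')
      (IsFixedPt.equiv_symm_iff.1 hfQ'))
    (mapsTo_Ioo_of_strictMono h₁.inv.1 (IsFixedPt.perm_inv hf₁P') (IsFixedPt.perm_inv hf₁Q'))
    (commutatorElement_eq_one_iff_commute.1 hrel.1) fun y hy => ?_⟩
  obtain ⟨m, hm⟩ := exists_pow_apply_mem_Ioo h₀.1 hlimP hlimQ hy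
  exact hrel.conj_comm_of_pow_apply_mem h₀ h₁ horb hm

/-- Otherwise `f₀` would commute with `f₁` on `(b, d)`, hence be the identity there. -/
lemma not_isOrbital_inv_mul (hrel : ThompsonRel f₀ f₁) (h₀ : IsPL0 f₀) (h₁ : IsPL0 f₁)
    {a b c d s P Q : ℝ} (horb₀ : IsOrbital f₀ a c) (hup : ∀ x ∈ Ioo a c, x < f₀ x)
    (horb₁ : IsOrbital f₁ b d) (hba : b ≤ a) (hcd : c ≤ d) (hs : s ∈ Ioo b d) (hfs : f₀ s = s)
    (hPc : P < c) (hcQ : c ≤ Q) : ¬IsOrbital (f₁⁻¹ * f₀) P Q := by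
  intro horb
  have hac : Ioo a c ⊆ Ioo b d := Ioo_subset_Ioo hba hcd
  have hPa : P ≤ a := by
    by_contra! haP
    have := hrel.apply_inv_pow_eq h₀ h₁ horb.left_mem_frontier 0
    rw [zero_add, pow_one] at this
    exact horb₁.2.1 (hac (horb₀.inv.mapsTo h₀.inv.1 ⟨haP, hPc⟩)) this
  obtain ⟨P', Q', hP'a, hcQ', hP', hQ', hcomm⟩ :=
    hrel.exists_eqOn_comm h₀ h₁ horb horb₀.2.2.1 horb₀.2.2.2 hPa hcQ
  have hsub : Ioo b d ⊆ Ioo P' Q' := Ioo_subset_Ioo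
    (horb₁.le_left_of_apply_eq hP' (hP'a.trans_lt (horb₀.1.trans_le hcd)))
    (horb₁.right_le_of_apply_eq hQ' ((hba.trans_lt horb₀.1).trans_le hcQ'))
  have hid := horb₁.eqOn_id_of_eqOn_comm h₁ h₀ (hcomm.mono hsub) hs hfs
  obtain ⟨x, hx⟩ := nonempty_Ioo.2 horb₀.1
  exact (hup x hx).ne' (hid (hac hx))

lemma eventuallyEq_nhdsLE (hrel : ThompsonRel f₀ f₁) (h₀ : IsPL0 f₀) (h₁ : IsPL0 f₁) {a c : ℝ}
    (horb₀ : IsOrbital f₀ a c) (hup : ∀ x ∈ Ioo a c, x < f₀ x) (hne : ¬IsOrbital f₁ a c)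
    (hmeet : (Ioo a c ∩ Supp f₁).Nonempty) : ⇑f₀ =ᶠ[𝓝[≤] c] ⇑f₁ := by
  obtain ⟨z, hz, hzU⟩ := hmeet
  obtain ⟨b, d, horb₁, hzbd⟩ := h₁.exists_isOrbital_mem hzU
  by_cases hb : b ∈ Ioo a c
  · exact hrel.eventuallyEq_of_mem_frontier h₀ h₁ horb₀ hup horb₁.left_mem_frontier hb
  by_cases hd : d ∈ Ioo a c
  · exact hrel.eventuallyEq_of_mem_frontier h₀ h₁ horb₀ hup horb₁.right_mem_frontier hd
  have hba : b ≤ a := not_lt.1 fun hab => hb ⟨hab, hzbd.1.trans hz.2⟩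
  have hcd : c ≤ d := not_lt.1 fun hdc => hd ⟨hz.1.trans hzbd.2, hdc⟩
  obtain ⟨s, hs, hfs⟩ : ∃ s ∈ Ioo b d, f₀ s = s := by
    rcases hba.lt_or_eq with hba | rfl
    · exact ⟨a, ⟨hba, horb₀.1.trans_le hcd⟩, horb₀.2.2.1⟩
    rcases hcd.lt_or_eq with hcd | rfl
    · exact ⟨c, ⟨horb₀.1, hcd⟩, horb₀.2.2.2⟩
    exact (hne horb₁).elim
  rcases (h₁.inv.mul h₀).eventuallyEq_id_or_exists_isOrbital c with hid | ⟨P, Q, horb, hPc, hcQ⟩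
  · filter_upwards [hid] with y hy using Equiv.Perm.inv_eq_iff_eq.1 hy
  · exact (hrel.not_isOrbital_inv_mul h₀ h₁ horb₀ hup horb₁ hba hcd hs hfs hPc hcQ horb).elim

end ThompsonRel

lemma IsOrbital.right_eq_of_forall_le {g : Equiv.Perm ℝ} (hg : Continuous g)
    {a c p bn dn : ℝ} (hpc : p < c) (hsub : Ioo p c ⊆ Supp g) (hc : g c = c)
    (horb : IsOrbital g bn dn) (hsubn : Ioo bn dn ⊆ Ioo a c)
    (hmax : ∀ b d, IsOrbital g b d → Ioo b d ⊆ Ioo a c → b ≤ bn) : dn = c := by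
  obtain ⟨hab, hdc⟩ := (Ioo_subset_Ioo_iff horb.1).1 hsubn
  refine hdc.antisymm (not_lt.1 fun hdc' => ?_)
  obtain ⟨P, Q, horb', hP, hQ⟩ := exists_isOrbital_of_Ioo_subset hg (le_max_right p dn)
    horb.2.2.2 (max_lt hpc hdc') (fun y hy => hsub ⟨(le_max_left _ _).trans_lt hy.1, hy.2⟩)
    le_rfl hc
  have := hmax P Q horb' (Ioo_subset_Ioo (hab.trans (horb.1.le.trans hP.1)) hQ.2)
  linarith [hP.1, horb.1]

/-- Suppose `f₀, f₁ ∈ PL₀(I)` satisfy the two standard relations of Thompson's group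
`F`, `(a,c)` is an orbital of `f₀` on which `f₀ x > x` (an up-bump), `(a,c)` is not
an orbital of `f₁`, but `(a,c)` meets the support of `f₁`.  Then `f₀` and `f₁` agree
on some interval `[p,c]` with `p < c`; in particular the largest orbital `(bₙ,dₙ)`
of `f₁` contained in `(a,c)` satisfies `dₙ = c`. -/
theorem agree_near_top_endpoint (f₀ f₁ : Equiv.Perm ℝ)
    (h₀ : IsPL0 f₀) (h₁ : IsPL0 f₁) (hrel : ThompsonRel f₀ f₁) (a c : ℝ)
    (horb₀ : IsOrbital f₀ a c) (hup : ∀ x ∈ Set.Ioo a c, x < f₀ x)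
    (hne : ¬ IsOrbital f₁ a c) (hmeet : (Set.Ioo a c ∩ Supp f₁).Nonempty) :
    (∃ p : ℝ, p < c ∧ ∀ x ∈ Set.Icc p c, f₀ x = f₁ x) ∧
    ∀ bn dn : ℝ, IsOrbital f₁ bn dn → Set.Ioo bn dn ⊆ Set.Ioo a c →
      (∀ b d : ℝ, IsOrbital f₁ b d → Set.Ioo b d ⊆ Set.Ioo a c → b ≤ bn) →
      dn = c := by
  obtain ⟨p, hpc, hp⟩ := mem_nhdsLE_iff_exists_Icc_subset.1
    (hrel.eventuallyEq_nhdsLE h₀ h₁ horb₀ hup hne hmeet)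
  refine ⟨⟨p, hpc, hp⟩, fun bn dn horb hsub hmax => horb.right_eq_of_forall_le h₁.continuous
    (max_lt hpc horb₀.1) (fun y hy => ?_) ((hp (right_mem_Icc.2 hpc.le)).symm.trans horb₀.2.2.2)
    hsub hmax⟩
  have hfy : f₀ y = f₁ y := hp ⟨(le_max_left _ _).trans hy.1.le, hy.2.le⟩
  exact (hfy ▸ (hup y ⟨(le_max_right _ _).trans_lt hy.1, hy.2⟩).ne' : f₁ y ≠ y)
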